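/- (Theorem 2, optimal rate region with user dropouts) In the secure aggregation with an oblivious server and user dropouts model: (converse) every protocol satisfying dropout correctness and server security must have L_X ≥ L, L_Y ≥ L, H(Z_k) ≥ K·L for every user k, and H(Z_Σ) ≥ K·L; (achievability) there exists a protocol with L = 1, L_X = L_Y = 1, keys Z_k and source key Z_Σ each taking values in (F_q)^K, satisfying dropout correctness, server security, and dropout user security. Hence the optimal rate region is exactly {(R_X, R_Y, R_Z, R_{Z_Σ}) : R_X ≥ 1, R_Y ≥ 1, R_Z ≥ K, R_{Z_Σ} ≥ K}. -/

import Mathlib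

open Classical
open scoped BigOperators

/-- Probability of the event `E` under the probability mass function `p`
on a finite sample space `Ω`. -/
noncomputable def pr {Ω : Type*} [Fintype Ω] (p : Ω → ℝ) (E : Ω → Prop) : ℝ :=
  ∑ ω, if E ω then p ω else 0

/-- Shannon entropy of the random variable `X` in base-`q` units. -/
noncomputable def ent {Ω α : Type*} [Fintype Ω] [Fintype α] (q : ℕ) (p : Ω → ℝ)
    (X : Ω → α) : ℝ :=
  -∑ a, pr p (fun ω => X ω = a) * Real.logb q (pr p (fun ω => X ω = a))

/-- Conditional entropy `H(X | Y) = H(X, Y) − H(Y)`, base `q`. -/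
noncomputable def condEnt {Ω α β : Type*} [Fintype Ω] [Fintype α] [Fintype β]
    (q : ℕ) (p : Ω → ℝ) (X : Ω → α) (Y : Ω → β) : ℝ :=
  ent q p (fun ω => (X ω, Y ω)) - ent q p Y

/-- Mutual information `I(X ; Y) = H(X) + H(Y) − H(X, Y)`, base `q`. -/
noncomputable def mutInf {Ω α β : Type*} [Fintype Ω] [Fintype α] [Fintype β]
    (q : ℕ) (p : Ω → ℝ) (X : Ω → α) (Y : Ω → β) : ℝ :=
  ent q p X + ent q p Y - ent q p (fun ω => (X ω, Y ω))

/-- Conditional mutual information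
`I(X ; Y | Z) = H(X, Z) + H(Y, Z) − H(X, Y, Z) − H(Z)`, base `q`. -/
noncomputable def condMutInf {Ω α β γ : Type*} [Fintype Ω] [Fintype α] [Fintype β] [Fintype γ]
    (q : ℕ) (p : Ω → ℝ) (X : Ω → α) (Y : Ω → β) (Z : Ω → γ) : ℝ :=
  ent q p (fun ω => (X ω, Z ω)) + ent q p (fun ω => (Y ω, Z ω))
    - ent q p (fun ω => (X ω, Y ω, Z ω)) - ent q p Z


set_option linter.unusedSectionVars false
set_option linter.unusedVariables false

section PR
variable {Ω : Type*} [Fintype Ω] {p : Ω → ℝ} {α β : Type*} [Fintype α] [Fintype β]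

lemma pr_congr {E E' : Ω → Prop} (h : ∀ ω, E ω ↔ E' ω) : pr p E = pr p E' := by
  unfold pr
  exact Finset.sum_congr rfl fun ω _ => by rw [if_congr (h ω) rfl rfl]

lemma pr_nonneg (hp0 : ∀ ω, 0 ≤ p ω) (E : Ω → Prop) : 0 ≤ pr p E := by
  unfold pr
  exact Finset.sum_nonneg fun ω _ => by by_cases h : E ω <;> simp [h, hp0 ω]

lemma pr_le_one (hp0 : ∀ ω, 0 ≤ p ω) (hp1 : ∑ ω, p ω = 1) (E : Ω → Prop) :
    pr p E ≤ 1 := by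
  unfold pr
  rw [← hp1]
  exact Finset.sum_le_sum fun ω _ => by by_cases h : E ω <;> simp [h, hp0 ω]

lemma pr_false : pr p (fun _ => False) = 0 := by simp [pr]

lemma pr_mono (hp0 : ∀ ω, 0 ≤ p ω) {E E' : Ω → Prop} (h : ∀ ω, E ω → E' ω) :
    pr p E ≤ pr p E' := by
  unfold pr
  refine Finset.sum_le_sum fun ω _ => ?_
  by_cases hE : E ω
  · simp [hE, h ω hE]
  · by_cases hE' : E' ω <;> simp [hE, hE', hp0 ω]

lemma pr_partition (X : Ω → α) (E : Ω → Prop) :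
    ∑ a, pr p (fun ω => E ω ∧ X ω = a) = pr p E := by
  unfold pr
  rw [Finset.sum_comm]
  refine Finset.sum_congr rfl fun ω _ => ?_
  by_cases hE : E ω <;> simp [hE]

lemma sum_pr_fiber (hp1 : ∑ ω, p ω = 1) (X : Ω → α) :
    ∑ a, pr p (fun ω => X ω = a) = 1 := by
  have := pr_partition (p := p) X (fun _ => True)
  simp only [true_and] at this
  rw [this]
  simpa [pr] using hp1

lemma pr_comp_eq (X : Ω → α) (f : α → β) (b : β) :
    pr p (fun ω => f (X ω) = b) = ∑ a, if f a = b then pr p (fun ω => X ω = a) else 0 := by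
  rw [← pr_partition (p := p) X (fun ω => f (X ω) = b)]
  refine Finset.sum_congr rfl fun a _ => ?_
  by_cases hfa : f a = b
  · rw [if_pos hfa]
    refine pr_congr fun ω => ?_
    constructor
    · exact fun h => h.2
    · exact fun h => ⟨by rw [h, hfa], h⟩
  · rw [if_neg hfa, ← pr_false (p := p)]
    refine pr_congr fun ω => ?_
    simp only [iff_false]
    rintro ⟨h1, h2⟩
    exact hfa (by rw [← h2, h1])

end PR

section Gibbs

lemma gibbs {q : ℕ} (hq : 2 ≤ q) {ι : Type*} [Fintype ι] (μ ν : ι → ℝ)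
    (hμ : ∀ i, 0 ≤ μ i)
    (hνpos : ∀ i, 0 < μ i → 0 < ν i)
    (hμ1 : ∑ i, μ i = 1)
    (hν1 : ∑ i ∈ Finset.univ.filter (fun i => 0 < μ i), ν i ≤ 1) :
    ∑ i, μ i * Real.logb q (ν i) ≤ ∑ i, μ i * Real.logb q (μ i) := by
  have hq1 : (1:ℝ) < q := by exact_mod_cast hq.trans_lt' one_lt_two
  have hlogq : 0 < Real.log q := Real.log_pos hq1
  set s := Finset.univ.filter (fun i => 0 < μ i) with hs
  have hrestr : ∀ (g : ι → ℝ), (∀ i, μ i = 0 → μ i * g i = 0) →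
      ∑ i, μ i * g i = ∑ i ∈ s, μ i * g i := by
    intro g hg
    symm
    refine Finset.sum_subset (Finset.filter_subset _ _) fun i _ hi => ?_
    simp only [hs, Finset.mem_filter, Finset.mem_univ, true_and, not_lt] at hi
    exact hg i (le_antisymm hi (hμ i))
  rw [hrestr _ (fun i h => by rw [h, zero_mul]), hrestr _ (fun i h => by rw [h, zero_mul])]
  rw [← sub_nonneg, ← Finset.sum_sub_distrib]
  have key : ∑ i ∈ s, (μ i * Real.logb q (μ i) - μ i * Real.logb q (ν i)) ≥ 0 := by
    have h1 : ∀ i ∈ s, μ i * Real.logb q (ν i) - μ i * Real.logb q (μ i)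
        ≤ (ν i - μ i) / Real.log q := by
      intro i hi
      simp only [hs, Finset.mem_filter, Finset.mem_univ, true_and] at hi
      have hμi : 0 < μ i := hi
      have hνi : 0 < ν i := hνpos i hi
      rw [Real.logb, Real.logb, ← mul_div_assoc, ← mul_div_assoc, div_sub_div_same]
      rw [div_le_div_iff_of_pos_right hlogq]
      have : μ i * Real.log (ν i) - μ i * Real.log (μ i) = μ i * Real.log (ν i / μ i) := by
        rw [Real.log_div hνi.ne' hμi.ne']; ring
      rw [this]
      have hle := Real.log_le_sub_one_of_pos (div_pos hνi hμi)
      calc μ i * Real.log (ν i / μ i) ≤ μ i * (ν i / μ i - 1) :=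
            mul_le_mul_of_nonneg_left hle hμi.le
        _ = ν i - μ i := by field_simp
    have h2 : ∑ i ∈ s, (μ i * Real.logb q (ν i) - μ i * Real.logb q (μ i))
        ≤ ∑ i ∈ s, (ν i - μ i) / Real.log q := Finset.sum_le_sum h1
    have h3 : ∑ i ∈ s, (ν i - μ i) / Real.log q ≤ 0 := by
      rw [← Finset.sum_div]
      apply div_nonpos_of_nonpos_of_nonneg _ hlogq.le
      rw [Finset.sum_sub_distrib, sub_nonpos]
      have : ∑ i ∈ s, μ i = ∑ i, μ i := by
        refine Finset.sum_subset (Finset.filter_subset _ _) fun i _ hi => ?_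
        simp only [hs, Finset.mem_filter, Finset.mem_univ, true_and, not_lt] at hi
        exact le_antisymm hi (hμ i)
      rw [this, hμ1]
      exact hν1
    have h4 := h2.trans h3
    have e1 : ∑ i ∈ s, (μ i * Real.logb q (ν i) - μ i * Real.logb q (μ i))
        = (∑ i ∈ s, μ i * Real.logb q (ν i)) - ∑ i ∈ s, μ i * Real.logb q (μ i) :=
      Finset.sum_sub_distrib _ _
    have e2 : ∑ i ∈ s, (μ i * Real.logb q (μ i) - μ i * Real.logb q (ν i))
        = (∑ i ∈ s, μ i * Real.logb q (μ i)) - ∑ i ∈ s, μ i * Real.logb q (ν i) :=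
      Finset.sum_sub_distrib _ _
    rw [e1] at h4
    rw [ge_iff_le, e2]
    linarith
  linarith [key, (Finset.sum_sub_distrib (s := s)
      (f := fun i => μ i * Real.logb q (μ i)) (g := fun i => μ i * Real.logb q (ν i)))]

end Gibbs

section SumHelp
variable {α β γ : Type*} [Fintype α] [Fintype β] [Fintype γ]

lemma sum3 (h : α × β × γ → ℝ) : ∑ t, h t = ∑ a, ∑ b, ∑ c, h (a, b, c) := by
  rw [Fintype.sum_prod_type]
  exact Finset.sum_congr rfl fun a _ => Fintype.sum_prod_type _

lemma sum_swap3c (h : α → β → γ → ℝ) :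
    ∑ a, ∑ b, ∑ c, h a b c = ∑ c, ∑ a, ∑ b, h a b c := by
  rw [show ∑ a, ∑ b, ∑ c, h a b c = ∑ a, ∑ c, ∑ b, h a b c from
    Finset.sum_congr rfl fun a _ => Finset.sum_comm]
  exact Finset.sum_comm

lemma sum_swap3b (h : α → β → γ → ℝ) :
    ∑ a, ∑ b, ∑ c, h a b c = ∑ b, ∑ c, ∑ a, h a b c := by
  rw [show ∑ a, ∑ b, ∑ c, h a b c = ∑ b, ∑ a, ∑ c, h a b c from Finset.sum_comm]
  exact Finset.sum_congr rfl fun b _ => Finset.sum_comm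

end SumHelp

section Ent
variable {Ω : Type*} [Fintype Ω] {p : Ω → ℝ} {q : ℕ}
variable {α β γ : Type*} [Fintype α] [Fintype β] [Fintype γ]

lemma ent_comp_le (hq : 2 ≤ q) (hp0 : ∀ ω, 0 ≤ p ω) (X : Ω → α) (f : α → β) :
    ent q p (fun ω => f (X ω)) ≤ ent q p X := by
  have hq1 : (1:ℝ) < q := by exact_mod_cast hq.trans_lt' one_lt_two
  unfold ent
  rw [neg_le_neg_iff]
  calc ∑ a, pr p (fun ω => X ω = a) * Real.logb q (pr p (fun ω => X ω = a))
      ≤ ∑ a, pr p (fun ω => X ω = a) * Real.logb q (pr p (fun ω => f (X ω) = f a)) := by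
        refine Finset.sum_le_sum fun a _ => ?_
        rcases eq_or_lt_of_le (pr_nonneg hp0 (fun ω => X ω = a)) with h0 | h0
        · rw [← h0, zero_mul, zero_mul]
        · refine mul_le_mul_of_nonneg_left ?_ (le_of_lt h0)
          exact Real.logb_le_logb_of_le hq1 h0
            (pr_mono hp0 fun ω h => by rw [h])
    _ = ∑ a, ∑ b, (if f a = b then
          pr p (fun ω => X ω = a) * Real.logb q (pr p (fun ω => f (X ω) = b)) else 0) := by
        refine Finset.sum_congr rfl fun a _ => ?_
        rw [Finset.sum_ite_eq Finset.univ (f a)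
          (fun b => pr p (fun ω => X ω = a) * Real.logb q (pr p (fun ω => f (X ω) = b)))]
        simp
    _ = ∑ b, ∑ a, (if f a = b then
          pr p (fun ω => X ω = a) * Real.logb q (pr p (fun ω => f (X ω) = b)) else 0) :=
        Finset.sum_comm
    _ = ∑ b, pr p (fun ω => f (X ω) = b) * Real.logb q (pr p (fun ω => f (X ω) = b)) := by
        refine Finset.sum_congr rfl fun b _ => ?_
        nth_rewrite 2 [pr_comp_eq X f b]
        rw [Finset.sum_mul]
        refine Finset.sum_congr rfl fun a _ => ?_
        rw [ite_mul, zero_mul]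

lemma ent_le_of_fn (hq : 2 ≤ q) (hp0 : ∀ ω, 0 ≤ p ω) {X : Ω → α} {Y : Ω → β}
    (f : α → β) (h : ∀ ω, Y ω = f (X ω)) : ent q p Y ≤ ent q p X := by
  have := ent_comp_le (p := p) hq hp0 X f
  rwa [show (fun ω => f (X ω)) = Y from funext fun ω => (h ω).symm] at this

lemma ent_congr (hq : 2 ≤ q) (hp0 : ∀ ω, 0 ≤ p ω) {X : Ω → α} {Y : Ω → β}
    (f : α → β) (g : β → α) (hf : ∀ ω, Y ω = f (X ω)) (hg : ∀ ω, X ω = g (Y ω)) :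
    ent q p X = ent q p Y :=
  le_antisymm (ent_le_of_fn hq hp0 g hg) (ent_le_of_fn hq hp0 f hf)

lemma ent_const (hp1 : ∑ ω, p ω = 1) (b : β) : ent q p (fun _ => b) = 0 := by
  unfold ent
  rw [neg_eq_zero]
  refine Finset.sum_eq_zero fun b' _ => ?_
  by_cases hb : b = b'
  · have : pr p (fun _ : Ω => b = b') = 1 := by
      rw [pr_congr (E' := fun _ => True) (fun ω => by simp [hb])]
      simpa [pr] using hp1
    rw [this]; simp
  · have : pr p (fun _ : Ω => b = b') = 0 := by
      rw [pr_congr (E' := fun _ => False) (fun ω => by simp [hb]), pr_false]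
    rw [this]; simp

lemma ent_le_logb_card (hq : 2 ≤ q) (hp0 : ∀ ω, 0 ≤ p ω) (hp1 : ∑ ω, p ω = 1)
    (X : Ω → α) : ent q p X ≤ Real.logb q (Fintype.card α) := by
  rcases isEmpty_or_nonempty α with hα | hα
  · exfalso
    have := sum_pr_fiber hp1 X
    rw [Finset.univ_eq_empty, Finset.sum_empty] at this
    norm_num at this
  have hcard : (0:ℝ) < Fintype.card α := by exact_mod_cast Fintype.card_pos
  unfold ent
  have hgibbs := gibbs hq (μ := fun a => pr p (fun ω => X ω = a))
    (ν := fun _ => (Fintype.card α : ℝ)⁻¹)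
    (fun a => pr_nonneg hp0 _)
    (fun a _ => by positivity)
    (sum_pr_fiber hp1 X)
    (by
      calc ∑ a ∈ Finset.univ.filter (fun a => 0 < pr p (fun ω => X ω = a)),
            (Fintype.card α : ℝ)⁻¹
          ≤ ∑ _a : α, (Fintype.card α : ℝ)⁻¹ :=
            Finset.sum_le_sum_of_subset_of_nonneg (Finset.filter_subset _ _)
              (fun _ _ _ => by positivity)
        _ = 1 := by
            rw [Finset.sum_const, Finset.card_univ, nsmul_eq_mul]
            field_simp)
  have h2 : -∑ a, pr p (fun ω => X ω = a) * Real.logb q (pr p (fun ω => X ω = a))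
      ≤ -∑ a, pr p (fun ω => X ω = a) * Real.logb q ((Fintype.card α : ℝ)⁻¹) :=
    neg_le_neg hgibbs
  refine h2.trans ?_
  rw [← Finset.sum_mul, sum_pr_fiber hp1 X, one_mul, Real.logb_inv, neg_neg]

lemma ent_submod (hq : 2 ≤ q) (hp0 : ∀ ω, 0 ≤ p ω) (hp1 : ∑ ω, p ω = 1)
    (X : Ω → α) (Y : Ω → β) (Z : Ω → γ) :
    ent q p (fun ω => (X ω, Y ω, Z ω)) + ent q p Z
      ≤ ent q p (fun ω => (X ω, Z ω)) + ent q p (fun ω => (Y ω, Z ω)) := by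
  classical
  set μ : α × β × γ → ℝ := fun t => pr p (fun ω => (X ω, Y ω, Z ω) = t) with hμdef
  set A : α × γ → ℝ := fun t => pr p (fun ω => (X ω, Z ω) = t) with hAdef
  set B : β × γ → ℝ := fun t => pr p (fun ω => (Y ω, Z ω) = t) with hBdef
  set C : γ → ℝ := fun c => pr p (fun ω => Z ω = c) with hCdef
  have hμ0 : ∀ t, 0 ≤ μ t := fun t => pr_nonneg hp0 _
  have hA0 : ∀ t, 0 ≤ A t := fun t => pr_nonneg hp0 _
  have hB0 : ∀ t, 0 ≤ B t := fun t => pr_nonneg hp0 _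
  have hC0 : ∀ c, 0 ≤ C c := fun c => pr_nonneg hp0 _
  have hmargA : ∀ a c, A (a, c) = ∑ b, μ (a, b, c) := by
    intro a c
    rw [show A (a, c) = pr p (fun ω => (X ω, Z ω) = (a, c)) from rfl,
      ← pr_partition (p := p) Y (fun ω => (X ω, Z ω) = (a, c))]
    refine Finset.sum_congr rfl fun b _ => pr_congr fun ω => ?_
    simp only [Prod.mk.injEq]; tauto
  have hmargB : ∀ b c, B (b, c) = ∑ a, μ (a, b, c) := by
    intro b c
    rw [show B (b, c) = pr p (fun ω => (Y ω, Z ω) = (b, c)) from rfl,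
      ← pr_partition (p := p) X (fun ω => (Y ω, Z ω) = (b, c))]
    refine Finset.sum_congr rfl fun a _ => pr_congr fun ω => ?_
    simp only [Prod.mk.injEq]; tauto
  have hmargCA : ∀ c, C c = ∑ a, A (a, c) := by
    intro c
    rw [show C c = pr p (fun ω => Z ω = c) from rfl,
      ← pr_partition (p := p) X (fun ω => Z ω = c)]
    refine Finset.sum_congr rfl fun a _ => pr_congr fun ω => ?_
    simp only [Prod.mk.injEq]; tauto
  have hmargCB : ∀ c, C c = ∑ b, B (b, c) := by
    intro c
    rw [show C c = pr p (fun ω => Z ω = c) from rfl,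
      ← pr_partition (p := p) Y (fun ω => Z ω = c)]
    refine Finset.sum_congr rfl fun b _ => pr_congr fun ω => ?_
    simp only [Prod.mk.injEq]; tauto
  have hμleA : ∀ t, μ t ≤ A (t.1, t.2.2) := fun t =>
    pr_mono hp0 fun ω h => by rw [← h]
  have hμleB : ∀ t, μ t ≤ B (t.2.1, t.2.2) := fun t =>
    pr_mono hp0 fun ω h => by rw [← h]
  have hμleC : ∀ t, μ t ≤ C t.2.2 := fun t =>
    pr_mono hp0 fun ω h => by rw [← h]
  -- entropies as sums over triples
  have entXZ : ent q p (fun ω => (X ω, Z ω))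
      = -∑ t : α × β × γ, μ t * Real.logb q (A (t.1, t.2.2)) := by
    unfold ent
    rw [neg_inj, sum3 (fun t => μ t * Real.logb q (A (t.1, t.2.2))),
      Fintype.sum_prod_type]
    refine Finset.sum_congr rfl fun a _ => ?_
    rw [Finset.sum_comm]
    refine Finset.sum_congr rfl fun c _ => ?_
    show A (a, c) * Real.logb q (A (a, c)) = _
    nth_rewrite 1 [hmargA a c]
    rw [Finset.sum_mul]
  have entYZ : ent q p (fun ω => (Y ω, Z ω))
      = -∑ t : α × β × γ, μ t * Real.logb q (B (t.2.1, t.2.2)) := by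
    unfold ent
    rw [neg_inj, sum3 (fun t => μ t * Real.logb q (B (t.2.1, t.2.2))),
      sum_swap3b (fun a b c => μ (a, b, c) * Real.logb q (B (b, c))),
      Fintype.sum_prod_type]
    refine Finset.sum_congr rfl fun b _ => ?_
    refine Finset.sum_congr rfl fun c _ => ?_
    show B (b, c) * Real.logb q (B (b, c)) = _
    nth_rewrite 1 [hmargB b c]
    rw [Finset.sum_mul]
  have entZonly : ent q p Z = -∑ t : α × β × γ, μ t * Real.logb q (C t.2.2) := by
    unfold ent
    rw [neg_inj, sum3 (fun t => μ t * Real.logb q (C t.2.2)),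
      sum_swap3c (fun a b c => μ (a, b, c) * Real.logb q (C c))]
    refine Finset.sum_congr rfl fun c _ => ?_
    show C c * Real.logb q (C c) = _
    nth_rewrite 1 [hmargCA c]
    rw [Finset.sum_mul]
    refine Finset.sum_congr rfl fun a _ => ?_
    nth_rewrite 1 [hmargA a c]
    rw [Finset.sum_mul]
  have entXYZ : ent q p (fun ω => (X ω, Y ω, Z ω))
      = -∑ t : α × β × γ, μ t * Real.logb q (μ t) := rfl
  rw [entXZ, entYZ, entZonly, entXYZ]
  rw [← neg_add, ← neg_add, neg_le_neg_iff, ← Finset.sum_add_distrib,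
    ← Finset.sum_add_distrib]
  -- goal: ∑ μ (logb A + logb B) ≤ ∑ (μ logb μ + μ logb C)
  set ν : α × β × γ → ℝ := fun t => A (t.1, t.2.2) * B (t.2.1, t.2.2) / C t.2.2 with hνdef
  have hgibbs := gibbs hq (μ := μ) (ν := ν) hμ0
    (fun t ht => by
      have h1 : 0 < A (t.1, t.2.2) := lt_of_lt_of_le ht (hμleA t)
      have h2 : 0 < B (t.2.1, t.2.2) := lt_of_lt_of_le ht (hμleB t)
      have h3 : 0 < C t.2.2 := lt_of_lt_of_le ht (hμleC t)
      exact div_pos (mul_pos h1 h2) h3)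
    (by
      rw [hμdef]
      exact sum_pr_fiber hp1 _)
    (by
      have hsub : Finset.univ.filter (fun t : α × β × γ => 0 < μ t)
          ⊆ Finset.univ.filter (fun t => 0 < C t.2.2) := by
        intro t ht
        simp only [Finset.mem_filter, Finset.mem_univ, true_and] at ht ⊢
        exact lt_of_lt_of_le ht (hμleC t)
      have hν0 : ∀ t : α × β × γ, 0 ≤ ν t := fun t =>
        div_nonneg (mul_nonneg (hA0 _) (hB0 _)) (hC0 _)
      refine le_trans (Finset.sum_le_sum_of_subset_of_nonneg hsub
        (fun t _ _ => hν0 t)) ?_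
      rw [Finset.sum_filter]
      calc ∑ t : α × β × γ, (if 0 < C t.2.2 then ν t else 0)
          = ∑ c, ∑ a, ∑ b, (if 0 < C c then A (a, c) * B (b, c) / C c else 0) := by
            rw [sum3 (fun t => if 0 < C t.2.2 then ν t else 0)]
            exact sum_swap3c (fun a b c => if 0 < C c then A (a, c) * B (b, c) / C c else 0)
        _ = ∑ c, (if 0 < C c then C c else 0) := by
            refine Finset.sum_congr rfl fun c _ => ?_
            by_cases hc : 0 < C c
            · simp only [if_pos hc]
              calc ∑ a, ∑ b, A (a, c) * B (b, c) / C c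
                  = ∑ a, A (a, c) * C c / C c := by
                    refine Finset.sum_congr rfl fun a _ => ?_
                    rw [← Finset.sum_div, ← Finset.mul_sum, ← hmargCB c]
                _ = ∑ a, A (a, c) := by
                    refine Finset.sum_congr rfl fun a _ => ?_
                    rw [mul_div_assoc, div_self hc.ne', mul_one]
                _ = C c := (hmargCA c).symm
            · simp [hc]
        _ ≤ ∑ c, C c := Finset.sum_le_sum fun c _ => by
            by_cases hc : 0 < C c <;> simp [hc, hC0 c]
        _ = 1 := by
            rw [hCdef]
            exact sum_pr_fiber hp1 Z)
  have hterm : ∀ t, μ t * Real.logb q (A (t.1, t.2.2)) + μ t * Real.logb q (B (t.2.1, t.2.2))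
      = μ t * Real.logb q (ν t) + μ t * Real.logb q (C t.2.2) := by
    intro t
    by_cases ht : μ t = 0
    · rw [ht]; ring
    have htpos : 0 < μ t := lt_of_le_of_ne (hμ0 t) (Ne.symm ht)
    have h1 : 0 < A (t.1, t.2.2) := lt_of_lt_of_le htpos (hμleA t)
    have h2 : 0 < B (t.2.1, t.2.2) := lt_of_lt_of_le htpos (hμleB t)
    have h3 : 0 < C t.2.2 := lt_of_lt_of_le htpos (hμleC t)
    have hν : ν t = A (t.1, t.2.2) * B (t.2.1, t.2.2) / C t.2.2 := rfl
    rw [hν, Real.logb_div (mul_ne_zero h1.ne' h2.ne') h3.ne',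
      Real.logb_mul h1.ne' h2.ne']
    ring
  calc ∑ t, (μ t * Real.logb q (A (t.1, t.2.2)) + μ t * Real.logb q (B (t.2.1, t.2.2)))
      = ∑ t, (μ t * Real.logb q (ν t) + μ t * Real.logb q (C t.2.2)) :=
        Finset.sum_congr rfl fun t _ => hterm t
    _ = (∑ t, μ t * Real.logb q (ν t)) + ∑ t, μ t * Real.logb q (C t.2.2) :=
        Finset.sum_add_distrib
    _ ≤ (∑ t, μ t * Real.logb q (μ t)) + ∑ t, μ t * Real.logb q (C t.2.2) :=
        add_le_add hgibbs le_rfl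
    _ = ∑ t, (μ t * Real.logb q (μ t) + μ t * Real.logb q (C t.2.2)) :=
        Finset.sum_add_distrib.symm

end Ent

section Ent2
variable {Ω : Type*} [Fintype Ω] {p : Ω → ℝ} {q : ℕ}
variable {α β γ : Type*} [Fintype α] [Fintype β] [Fintype γ]

set_option maxHeartbeats 1600000 in
lemma ent_pair_le (hq : 2 ≤ q) (hp0 : ∀ ω, 0 ≤ p ω) (hp1 : ∑ ω, p ω = 1)
    (X : Ω → α) (Y : Ω → β) :
    ent q p (fun ω => (X ω, Y ω)) ≤ ent q p X + ent q p Y := by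
  have h := ent_submod hq hp0 hp1 X Y (fun _ : Ω => ())
  have e1 : ent q p (fun ω => (X ω, Y ω, ())) = ent q p (fun ω => (X ω, Y ω)) :=
    ent_congr hq hp0 (fun t => (t.1, t.2.1)) (fun t => (t.1, t.2, ()))
      (fun ω => rfl) (fun ω => rfl)
  have e2 : ent q p (fun _ : Ω => ()) = 0 := ent_const hp1 ()
  have e3 : ent q p (fun ω => (X ω, ())) = ent q p X :=
    ent_congr hq hp0 Prod.fst (fun a => (a, ())) (fun ω => rfl) (fun ω => rfl)
  have e4 : ent q p (fun ω => (Y ω, ())) = ent q p Y :=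
    ent_congr hq hp0 Prod.fst (fun a => (a, ())) (fun ω => rfl) (fun ω => rfl)
  linarith

lemma ent_snd_le_pair (hq : 2 ≤ q) (hp0 : ∀ ω, 0 ≤ p ω) (X : Ω → α) (Y : Ω → β) :
    ent q p Y ≤ ent q p (fun ω => (X ω, Y ω)) :=
  ent_le_of_fn hq hp0 (fun t => t.2) (fun ω => rfl)

lemma ent_extend (hq : 2 ≤ q) (hp0 : ∀ ω, 0 ≤ p ω) (hp1 : ∑ ω, p ω = 1)
    {A : Ω → α} {B : Ω → β} {C : Ω → γ}
    (h : ent q p (fun ω => (A ω, B ω)) = ent q p B) :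
    ent q p (fun ω => (A ω, B ω, C ω)) = ent q p (fun ω => (B ω, C ω)) := by
  apply le_antisymm
  · have h2 := ent_submod hq hp0 hp1 A C B
    have e1 : ent q p (fun ω => (A ω, C ω, B ω)) = ent q p (fun ω => (A ω, B ω, C ω)) :=
      ent_congr hq hp0 (fun t => (t.1, t.2.2, t.2.1)) (fun t => (t.1, t.2.2, t.2.1))
        (fun ω => rfl) (fun ω => rfl)
    have e2 : ent q p (fun ω => (C ω, B ω)) = ent q p (fun ω => (B ω, C ω)) :=
      ent_congr hq hp0 (fun t => (t.2, t.1)) (fun t => (t.2, t.1))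
        (fun ω => rfl) (fun ω => rfl)
    linarith
  · exact ent_le_of_fn hq hp0 (fun t => t.2) (fun ω => rfl)

lemma ent_of_unif [Nonempty α] (hq : 2 ≤ q) {X : Ω → α}
    (h : ∀ a, pr p (fun ω => X ω = a) = (Fintype.card α : ℝ)⁻¹) :
    ent q p X = Real.logb q (Fintype.card α) := by
  have hc : (0:ℝ) < Fintype.card α := by exact_mod_cast Fintype.card_pos
  unfold ent
  calc -∑ a, pr p (fun ω => X ω = a) * Real.logb q (pr p (fun ω => X ω = a))
      = -∑ _a : α, (Fintype.card α : ℝ)⁻¹ * Real.logb q ((Fintype.card α : ℝ)⁻¹) := by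
        rw [neg_inj]
        exact Finset.sum_congr rfl fun a _ => by rw [h a]
    _ = -((Fintype.card α : ℝ) * ((Fintype.card α : ℝ)⁻¹ *
          Real.logb q ((Fintype.card α : ℝ)⁻¹))) := by
        rw [Finset.sum_const, Finset.card_univ, nsmul_eq_mul]
    _ = Real.logb q (Fintype.card α) := by
        rw [← mul_assoc, mul_inv_cancel₀ hc.ne', one_mul, Real.logb_inv, neg_neg]

lemma ent_pair_of_unif [Nonempty α] (hq : 2 ≤ q) (hp0 : ∀ ω, 0 ≤ p ω)
    (hp1 : ∑ ω, p ω = 1) {A : Ω → α} {V : Ω → γ}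
    (h : ∀ a v, pr p (fun ω => A ω = a ∧ V ω = v)
      = (Fintype.card α : ℝ)⁻¹ * pr p (fun ω => V ω = v)) :
    ent q p (fun ω => (A ω, V ω)) = Real.logb q (Fintype.card α) + ent q p V := by
  have hc : (0:ℝ) < Fintype.card α := by exact_mod_cast Fintype.card_pos
  set u : ℝ := (Fintype.card α : ℝ)⁻¹ with hu
  have hupos : 0 < u := by positivity
  have event : ∀ (t : α × γ), pr p (fun ω => (A ω, V ω) = t)
      = u * pr p (fun ω => V ω = t.2) := by
    intro t
    rw [← h t.1 t.2]
    exact pr_congr fun ω => by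
      constructor
      · intro he; rw [← he]; exact ⟨rfl, rfl⟩
      · rintro ⟨h1, h2⟩; rw [h1, h2]
  unfold ent
  rw [Fintype.sum_prod_type]
  have key : ∀ a : α, ∑ v, pr p (fun ω => (A ω, V ω) = (a, v))
        * Real.logb q (pr p (fun ω => (A ω, V ω) = (a, v)))
      = u * Real.logb q u
        + u * ∑ v, pr p (fun ω => V ω = v) * Real.logb q (pr p (fun ω => V ω = v)) := by
    intro a
    have hterm : ∀ v, pr p (fun ω => (A ω, V ω) = (a, v))
          * Real.logb q (pr p (fun ω => (A ω, V ω) = (a, v)))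
        = u * (pr p (fun ω => V ω = v) * Real.logb q u)
          + u * (pr p (fun ω => V ω = v) * Real.logb q (pr p (fun ω => V ω = v))) := by
      intro v
      rw [event (a, v)]
      by_cases hv : pr p (fun ω => V ω = v) = 0
      · rw [hv]; ring
      · rw [Real.logb_mul hupos.ne' hv]; ring
    rw [Finset.sum_congr rfl fun v _ => hterm v, Finset.sum_add_distrib,
      ← Finset.mul_sum, ← Finset.mul_sum, ← Finset.sum_mul, sum_pr_fiber hp1 V, one_mul]
  rw [Finset.sum_congr rfl fun a _ => key a, Finset.sum_add_distrib,
    Finset.sum_const, Finset.sum_const, Finset.card_univ, nsmul_eq_mul, nsmul_eq_mul]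
  rw [neg_add, ← mul_assoc, ← mul_assoc, mul_inv_cancel₀ hc.ne', one_mul, one_mul,
    Real.logb_inv]
  ring

lemma logb_pow_self {q : ℕ} (hq : 2 ≤ q) (m : ℕ) :
    Real.logb q ((q : ℝ) ^ m) = m := by
  have hq1 : (1:ℝ) < q := by exact_mod_cast hq.trans_lt' one_lt_two
  rw [Real.logb_pow, Real.logb_self_eq_one hq1, mul_one]

lemma card_fun_fin (F : Type*) [Fintype F] (m : ℕ) :
    Fintype.card (Fin m → F) = Fintype.card F ^ m := by
  rw [Fintype.card_fun, Fintype.card_fin]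

lemma logb_card_fun {F : Type*} [Fintype F] (hq : 2 ≤ Fintype.card F) (m : ℕ) :
    Real.logb (Fintype.card F) (Fintype.card (Fin m → F)) = m := by
  rw [card_fun_fin, Nat.cast_pow, logb_pow_self hq]

lemma ent_le_nat {F : Type*} [Fintype F] (hq : 2 ≤ Fintype.card F)
    (hp0 : ∀ ω, 0 ≤ p ω) (hp1 : ∑ ω, p ω = 1) {m : ℕ} (X : Ω → (Fin m → F)) :
    ent (Fintype.card F) p X ≤ m := by
  have := ent_le_logb_card hq hp0 hp1 X
  rwa [logb_card_fun hq] at this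

end Ent2

section Model
variable {F : Type} [Fintype F] {K L LZ : ℕ}
variable {Ω : Type} [Fintype Ω] {p : Ω → ℝ}

lemma indep_of_fn [Nonempty F]
    (W : Fin K → Ω → Fin L → F) (Z : Fin K → Ω → Fin LZ → F)
    (hiid : ∀ (w : Fin K → Fin L → F) (z : Fin K → Fin LZ → F),
      pr p (fun ω => (∀ k, W k ω = w k) ∧ (∀ k, Z k ω = z k))
        = (1 / (Fintype.card F : ℝ) ^ L) ^ K * pr p (fun ω => ∀ k, Z k ω = z k))
    (j : Fin K) {γ : Type} [Fintype γ] (V : Ω → γ)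
    (f : ({u : Fin K // u ≠ j} → Fin L → F) → (Fin K → Fin LZ → F) → γ)
    (hV : ∀ ω, V ω = f (fun u => W u.1 ω) (fun k => Z k ω)) :
    ∀ (a : Fin L → F) (v : γ),
      pr p (fun ω => W j ω = a ∧ V ω = v)
        = (Fintype.card (Fin L → F) : ℝ)⁻¹ * pr p (fun ω => V ω = v) := by
  classical
  set T : Ω → ({u : Fin K // u ≠ j} → Fin L → F) × (Fin K → Fin LZ → F) :=
    fun ω => (fun u => W u.1 ω, fun k => Z k ω) with hT
  have key : ∀ (a : Fin L → F) (t : ({u : Fin K // u ≠ j} → Fin L → F) × (Fin K → Fin LZ → F)),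
      pr p (fun ω => W j ω = a ∧ T ω = t)
        = (1 / (Fintype.card F : ℝ) ^ L) ^ K * pr p (fun ω => ∀ k, Z k ω = t.2 k) := by
    intro a t
    set wfull : Fin K → Fin L → F := fun k => if h : k = j then a else t.1 ⟨k, h⟩ with hwfull
    rw [← hiid wfull t.2]
    refine pr_congr fun ω => ?_
    constructor
    · rintro ⟨hj, ht⟩
      have ht1 : (fun u : {u : Fin K // u ≠ j} => W u.1 ω) = t.1 := congrArg Prod.fst ht
      have ht2 : (fun k => Z k ω) = t.2 := congrArg Prod.snd ht
      refine ⟨fun k => ?_, fun k => congrFun ht2 k⟩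
      by_cases hk : k = j
      · subst hk
        simpa [hwfull] using hj
      · have := congrFun ht1 ⟨k, hk⟩
        simpa [hwfull, hk] using this
    · rintro ⟨hw, hz⟩
      constructor
      · have := hw j
        simpa [hwfull] using this
      · rw [hT]
        refine Prod.ext ?_ ?_
        · funext u
          have := hw u.1
          simpa [hwfull, u.2] using this
        · funext k
          exact hz k
  have step1 : ∀ (a : Fin L → F) (v : γ),
      pr p (fun ω => W j ω = a ∧ V ω = v)
        = ∑ t : ({u : Fin K // u ≠ j} → Fin L → F) × (Fin K → Fin LZ → F), if f t.1 t.2 = v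
            then (1 / (Fintype.card F : ℝ) ^ L) ^ K * pr p (fun ω => ∀ k, Z k ω = t.2 k)
            else 0 := by
    intro a v
    rw [← pr_partition (p := p) T (fun ω => W j ω = a ∧ V ω = v)]
    refine Finset.sum_congr rfl fun t _ => ?_
    by_cases hft : f t.1 t.2 = v
    · rw [if_pos hft, ← key a t]
      refine pr_congr fun ω => ?_
      constructor
      · rintro ⟨⟨h1, _⟩, h3⟩; exact ⟨h1, h3⟩
      · rintro ⟨h1, h3⟩
        refine ⟨⟨h1, ?_⟩, h3⟩
        rw [hV ω,
          show (fun u : {u : Fin K // u ≠ j} => W u.1 ω) = t.1 from congrArg Prod.fst h3,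
          show (fun k => Z k ω) = t.2 from congrArg Prod.snd h3]
        exact hft
    · rw [if_neg hft, ← pr_false (p := p)]
      refine pr_congr fun ω => ?_
      simp only [iff_false]
      rintro ⟨⟨_, h2⟩, h3⟩
      refine hft ?_
      rw [← show (fun u : {u : Fin K // u ≠ j} => W u.1 ω) = t.1 from congrArg Prod.fst h3,
        ← show (fun k => Z k ω) = t.2 from congrArg Prod.snd h3, ← hV ω]
      exact h2
  intro a v
  have hindep : ∀ a' : Fin L → F,
      pr p (fun ω => W j ω = a' ∧ V ω = v) = pr p (fun ω => W j ω = a ∧ V ω = v) := by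
    intro a'
    rw [step1 a v, step1 a' v]
  have hsum : pr p (fun ω => V ω = v)
      = (Fintype.card (Fin L → F) : ℝ) * pr p (fun ω => W j ω = a ∧ V ω = v) := by
    rw [← pr_partition (p := p) (W j) (fun ω => V ω = v)]
    calc ∑ a', pr p (fun ω => V ω = v ∧ W j ω = a')
        = ∑ a' : Fin L → F, pr p (fun ω => W j ω = a ∧ V ω = v) := by
          refine Finset.sum_congr rfl fun a' _ => ?_
          rw [← hindep a']
          exact pr_congr fun ω => and_comm
      _ = (Fintype.card (Fin L → F) : ℝ) * pr p (fun ω => W j ω = a ∧ V ω = v) := by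
          rw [Finset.sum_const, Finset.card_univ, nsmul_eq_mul]
  have hcard : (0:ℝ) < (Fintype.card (Fin L → F) : ℝ) := by
    have : 0 < Fintype.card (Fin L → F) := Fintype.card_pos
    exact_mod_cast this
  rw [hsum, ← mul_assoc, inv_mul_cancel₀ hcard.ne', one_mul]

lemma pr_W_unif
    (W : Fin K → Ω → Fin L → F) (Z : Fin K → Ω → Fin LZ → F)
    (hp1 : ∑ ω, p ω = 1)
    (hiid : ∀ (w : Fin K → Fin L → F) (z : Fin K → Fin LZ → F),
      pr p (fun ω => (∀ k, W k ω = w k) ∧ (∀ k, Z k ω = z k))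
        = (1 / (Fintype.card F : ℝ) ^ L) ^ K * pr p (fun ω => ∀ k, Z k ω = z k)) :
    ∀ w : Fin K → Fin L → F,
      pr p (fun ω => (fun k => W k ω) = w)
        = (Fintype.card (Fin K → Fin L → F) : ℝ)⁻¹ := by
  intro w
  rw [← pr_partition (p := p) (fun ω => fun k => Z k ω) (fun ω => (fun k => W k ω) = w)]
  have hterm : ∀ z : Fin K → Fin LZ → F,
      pr p (fun ω => (fun k => W k ω) = w ∧ (fun ω' => fun k => Z k ω') ω = z)
        = (1 / (Fintype.card F : ℝ) ^ L) ^ K * pr p (fun ω => ∀ k, Z k ω = z k) := by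
    intro z
    rw [← hiid w z]
    refine pr_congr fun ω => ?_
    rw [funext_iff, funext_iff (f := fun k => Z k ω)]
  rw [Finset.sum_congr rfl fun z _ => hterm z, ← Finset.mul_sum]
  have hZ1 : ∑ z : Fin K → Fin LZ → F, pr p (fun ω => ∀ k, Z k ω = z k) = 1 := by
    rw [show (fun z : Fin K → Fin LZ → F => pr p (fun ω => ∀ k, Z k ω = z k))
        = fun z => pr p (fun ω => (fun k => Z k ω) = z) from
      funext fun z => pr_congr fun ω => (funext_iff (f := fun k => Z k ω)).symm]
    exact sum_pr_fiber hp1 _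
  rw [hZ1, mul_one]
  have hc : (Fintype.card (Fin K → Fin L → F) : ℝ) = ((Fintype.card F : ℝ) ^ L) ^ K := by
    rw [Fintype.card_fun, Fintype.card_fin, card_fun_fin]
    push_cast
    ring
  rw [hc, one_div]
  simp only [← inv_pow]

lemma logb_card_WW {F : Type} [Fintype F] (hq : 2 ≤ Fintype.card F) (K L : ℕ) :
    Real.logb (Fintype.card F) (Fintype.card (Fin K → Fin L → F)) = (K : ℝ) * L := by
  rw [Fintype.card_fun, Fintype.card_fin, card_fun_fin, ← pow_mul]
  rw [Nat.cast_pow, logb_pow_self hq]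
  push_cast
  ring

end Model

section ZeroLemmas
variable {Ω : Type*} [Fintype Ω] {p : Ω → ℝ} {q : ℕ}
variable {α β γ : Type*} [Fintype α] [Fintype β] [Fintype γ]

lemma condEnt_eq_zero_of_fn (hq : 2 ≤ q) (hp0 : ∀ ω, 0 ≤ p ω)
    {S : Ω → α} {T : Ω → β} (f : β → α) (h : ∀ ω, S ω = f (T ω)) :
    condEnt q p S T = 0 := by
  have e : ent q p (fun ω => (S ω, T ω)) = ent q p T :=
    ent_congr hq hp0 (fun t => t.2) (fun t => (f t, t)) (fun ω => rfl)
      (fun ω => by rw [h ω])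
  unfold condEnt
  rw [e, sub_self]

lemma condMutInf_eq_zero_of_fn (hq : 2 ≤ q) (hp0 : ∀ ω, 0 ≤ p ω)
    {Xv : Ω → α} {Yv : Ω → β} {Zv : Ω → γ} (f : γ → β) (h : ∀ ω, Yv ω = f (Zv ω)) :
    condMutInf q p Xv Yv Zv = 0 := by
  have e1 : ent q p (fun ω => (Yv ω, Zv ω)) = ent q p Zv :=
    ent_congr hq hp0 (fun t => t.2) (fun z => (f z, z)) (fun ω => rfl)
      (fun ω => by rw [h ω])
  have e2 : ent q p (fun ω => (Xv ω, Yv ω, Zv ω)) = ent q p (fun ω => (Xv ω, Zv ω)) :=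
    ent_congr hq hp0 (fun t => (t.1, t.2.2)) (fun s => (s.1, f s.2, s.2))
      (fun ω => rfl) (fun ω => by rw [h ω])
  unfold condMutInf
  rw [e1, e2]
  ring

end ZeroLemmas

lemma ite_clean {P Q : Prop} {i1 : Decidable P} {i2 : Decidable Q} (h : P = Q) (x y : ℝ) :
    @ite _ P i1 x y = @ite _ Q i2 x y := by
  subst h
  rw [Subsingleton.elim i1 i2]

set_option maxHeartbeats 2000000 in
theorem achievpart (F : Type) [Field F] [Fintype F] (K : ℕ) (hK : 2 ≤ K) :
    (∃ (n : ℕ) (p : Fin n → ℝ)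
        (W : Fin K → Fin n → F) (Z : Fin K → Fin n → Fin K → F)
        (ZS : Fin n → Fin K → F) (X : Fin K → Fin n → F)
        (Y : Finset (Fin K) → Fin K → Fin n → F),
      (∀ ω, 0 ≤ p ω) ∧ (∑ ω, p ω) = 1 ∧
      (∀ (w : Fin K → F) (z : Fin K → Fin K → F),
        pr p (fun ω => (∀ k, W k ω = w k) ∧ (∀ k, Z k ω = z k))
          = (1 / (Fintype.card F : ℝ)) ^ K * pr p (fun ω => ∀ k, Z k ω = z k)) ∧
      (∀ k, ∃ g : (Fin K → F) → Fin K → F, ∀ ω, Z k ω = g (ZS ω)) ∧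
      (∀ k, ∃ φ : F → (Fin K → F) → F, ∀ ω, X k ω = φ (W k ω) (Z k ω)) ∧
      (∀ (U : Finset (Fin K)), ∀ k ∈ U,
        ∃ ψ : ((u : {u : Fin K // u ∈ U}) → F) → F,
          ∀ ω, Y U k ω = ψ (fun u => X u.1 ω)) ∧
      (∀ (U : Finset (Fin K)), ∀ k ∈ U,
        condEnt (Fintype.card F) p (fun ω => ∑ u ∈ U, W u ω)
          (fun ω => (Y U k ω, W k ω, Z k ω)) = 0) ∧
      (mutInf (Fintype.card F) p (fun ω => fun k => W k ω)
          (fun ω => fun k => X k ω) = 0) ∧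
      (∀ (U : Finset (Fin K)), ∀ k ∈ U,
        condMutInf (Fintype.card F) p (fun ω => fun u => W u ω) (Y U k)
          (fun ω => (∑ u ∈ U, W u ω, W k ω, Z k ω)) = 0)) := by
  classical
  have hq : 2 ≤ Fintype.card F := Fintype.one_lt_card
  set m := Fintype.card ((Fin K → F) × (Fin K → F)) with hm
  set e : Fin m ≃ (Fin K → F) × (Fin K → F) := (Fintype.equivFin _).symm with he
  set cFK := Fintype.card (Fin K → F) with hcFK
  have hcFKpos : 0 < cFK := Fintype.card_pos
  have hmprod : m = cFK * cFK := by rw [hm, Fintype.card_prod]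
  have hmpos : 0 < m := by rw [hmprod]; exact Nat.mul_pos hcFKpos hcFKpos
  have hmR : (0:ℝ) < m := by exact_mod_cast hmpos
  have hcFKR : (0:ℝ) < cFK := by exact_mod_cast hcFKpos
  set p : Fin m → ℝ := fun _ => (m:ℝ)⁻¹ with hp
  have hp0 : ∀ ω, 0 ≤ p ω := fun ω => by rw [hp]; positivity
  have hp1 : ∑ ω, p ω = 1 := by
    rw [hp, Finset.sum_const, Finset.card_univ, Fintype.card_fin, nsmul_eq_mul,
      mul_inv_cancel₀ hmR.ne']
  have count : ∀ E : (Fin K → F) × (Fin K → F) → Prop,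
      pr p (fun ω => E (e ω)) = ∑ t, if E t then (m:ℝ)⁻¹ else 0 := by
    intro E
    unfold pr
    exact Fintype.sum_equiv e _ _ (fun ω => rfl)
  refine ⟨m, p, fun k ω => (e ω).1 k, fun k ω => (e ω).2, fun ω => (e ω).2,
    fun k ω => (e ω).1 k + (e ω).2 k,
    fun U k ω => ∑ u ∈ U, ((e ω).1 u + (e ω).2 u),
    hp0, hp1, ?_, ?_, ?_, ?_, ?_, ?_, ?_⟩
  · -- iid condition
    intro w z
    set Q : (Fin K → F) → Prop := fun s => ∀ k, s = z k with hQ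
    have l1 : pr p (fun ω => (∀ k, (e ω).1 k = w k) ∧ (∀ k, (e ω).2 = z k))
        = ∑ s, if Q s then (m:ℝ)⁻¹ else 0 := by
      rw [(pr_congr fun ω => Iff.rfl).trans
        (count (fun t => (∀ k, t.1 k = w k) ∧ Q t.2))]
      rw [Fintype.sum_prod_type]
      trans (∑ a : Fin K → F, ∑ s : Fin K → F,
        if (∀ k, a k = w k) ∧ Q s then (m:ℝ)⁻¹ else 0)
      · exact Finset.sum_congr rfl fun a _ => Finset.sum_congr rfl fun s _ =>
          ite_clean rfl _ _
      rw [Finset.sum_comm]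
      refine Finset.sum_congr rfl fun s _ => ?_
      by_cases hQs : Q s
      · rw [if_pos hQs]
        calc ∑ a : Fin K → F, (if (∀ k, a k = w k) ∧ Q s then (m:ℝ)⁻¹ else 0)
            = ∑ a : Fin K → F, (if a = w then (m:ℝ)⁻¹ else 0) :=
              Finset.sum_congr rfl fun a _ => if_congr
                ⟨fun h => funext h.1, fun h => ⟨fun k => congrFun h k, hQs⟩⟩ rfl rfl
          _ = (m:ℝ)⁻¹ := by simp
      · rw [if_neg hQs]
        refine Finset.sum_eq_zero fun a _ => ?_
        simp [hQs]
    have l2 : pr p (fun ω => ∀ k, (e ω).2 = z k)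
        = (cFK : ℝ) * ∑ s, if Q s then (m:ℝ)⁻¹ else 0 := by
      rw [(pr_congr fun ω => Iff.rfl).trans (count (fun t => Q t.2))]
      rw [Fintype.sum_prod_type]
      trans (∑ _a : Fin K → F, ∑ s : Fin K → F, if Q s then (m:ℝ)⁻¹ else 0)
      · exact Finset.sum_congr rfl fun a _ => Finset.sum_congr rfl fun s _ =>
          ite_clean rfl _ _
      rw [Finset.sum_const, Finset.card_univ, ← hcFK, nsmul_eq_mul]
    rw [l1, l2]
    rw [show cFK = Fintype.card F ^ K from by rw [hcFK, card_fun_fin]]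
    rw [one_div, ← mul_assoc]
    push_cast
    rw [← mul_pow, inv_mul_cancel₀ (by positivity : (Fintype.card F : ℝ) ≠ 0)]
    rw [one_pow, one_mul]
  · intro k
    exact ⟨id, fun ω => rfl⟩
  · intro k
    exact ⟨fun w z => w + z k, fun ω => rfl⟩
  · intro U k hk
    exact ⟨fun xs => ∑ u ∈ U.attach, xs u,
      fun ω => (Finset.sum_attach U (fun u => (e ω).1 u + (e ω).2 u)).symm⟩
  · intro U k hk
    refine condEnt_eq_zero_of_fn hq hp0
      (f := fun t => t.1 - ∑ u ∈ U, t.2.2 u) (fun ω => ?_)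
    show ∑ u ∈ U, (e ω).1 u
      = (∑ u ∈ U, ((e ω).1 u + (e ω).2 u)) - ∑ u ∈ U, (e ω).2 u
    rw [Finset.sum_add_distrib, add_sub_cancel_right]
  · -- server security
    have hWunif : ∀ w0 : Fin K → F,
        pr p (fun ω => (fun k => (e ω).1 k) = w0) = (cFK : ℝ)⁻¹ := by
      intro w0
      rw [(pr_congr fun ω => Iff.rfl).trans (count (fun t => t.1 = w0))]
      rw [Fintype.sum_prod_type]
      trans (∑ a : Fin K → F, ∑ _s : Fin K → F, if a = w0 then (m:ℝ)⁻¹ else 0)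
      · exact Finset.sum_congr rfl fun a _ => Finset.sum_congr rfl fun s _ =>
          ite_clean rfl _ _
      calc ∑ a : Fin K → F, ∑ _s : Fin K → F, (if a = w0 then (m:ℝ)⁻¹ else 0)
          = ∑ a : Fin K → F, (if a = w0 then (cFK:ℝ) * (m:ℝ)⁻¹ else 0) := by
            refine Finset.sum_congr rfl fun a _ => ?_
            rw [Finset.sum_const, Finset.card_univ, ← hcFK, nsmul_eq_mul]
            by_cases ha : a = w0 <;> simp [ha]
        _ = (cFK:ℝ) * (m:ℝ)⁻¹ := by simp
        _ = (cFK:ℝ)⁻¹ := by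
            rw [hmprod]
            push_cast
            rw [mul_inv, ← mul_assoc, mul_inv_cancel₀ hcFKR.ne', one_mul]
    have hXunif : ∀ x0 : Fin K → F,
        pr p (fun ω => (fun k => (e ω).1 k + (e ω).2 k) = x0) = (cFK : ℝ)⁻¹ := by
      intro x0
      rw [(pr_congr fun ω => Iff.rfl).trans
        (count (fun t => (fun k => t.1 k + t.2 k) = x0))]
      rw [Fintype.sum_prod_type]
      trans (∑ a : Fin K → F, ∑ s : Fin K → F,
        if (fun k => a k + s k) = x0 then (m:ℝ)⁻¹ else 0)
      · exact Finset.sum_congr rfl fun a _ => Finset.sum_congr rfl fun s _ =>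
          ite_clean rfl _ _
      rw [Finset.sum_comm]
      calc ∑ s : Fin K → F, ∑ a : Fin K → F,
            (if (fun k => a k + s k) = x0 then (m:ℝ)⁻¹ else 0)
          = ∑ s : Fin K → F, ∑ a : Fin K → F,
            (if a = (fun k => x0 k - s k) then (m:ℝ)⁻¹ else 0) := by
            refine Finset.sum_congr rfl fun s _ => Finset.sum_congr rfl fun a _ => ?_
            refine if_congr ?_ rfl rfl
            rw [funext_iff, funext_iff (f := a)]
            exact forall_congr' fun k => by rw [eq_sub_iff_add_eq]
        _ = ∑ _s : Fin K → F, (m:ℝ)⁻¹ := by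
            refine Finset.sum_congr rfl fun s _ => ?_
            simp
        _ = (cFK:ℝ)⁻¹ := by
            rw [Finset.sum_const, Finset.card_univ, ← hcFK, nsmul_eq_mul, hmprod]
            push_cast
            rw [mul_inv, ← mul_assoc, mul_inv_cancel₀ hcFKR.ne', one_mul]
    have hWXunif : ∀ t0 : (Fin K → F) × (Fin K → F),
        pr p (fun ω => ((fun k => (e ω).1 k), (fun k => (e ω).1 k + (e ω).2 k)) = t0)
          = ((Fintype.card ((Fin K → F) × (Fin K → F))) : ℝ)⁻¹ := by
      intro t0
      rw [(pr_congr fun ω => Iff.rfl).trans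
        (count (fun t => ((fun k => t.1 k), (fun k => t.1 k + t.2 k)) = t0))]
      rw [← hm]
      trans (∑ t : (Fin K → F) × (Fin K → F),
        if t = (t0.1, fun k => t0.2 k - t0.1 k) then (m:ℝ)⁻¹ else 0)
      · refine Finset.sum_congr rfl fun t _ => ite_clean (propext ?_) _ _
        constructor
        · intro h
          obtain ⟨h1, h2⟩ := Prod.mk.inj h
          refine Prod.ext_iff.mpr ⟨funext fun k => congrFun h1 k, funext fun k => ?_⟩
          have h2k := congrFun h2 k
          have h1k := congrFun h1 k
          show t.2 k = t0.2 k - t0.1 k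
          rw [← h2k, ← h1k]
          show t.2 k = (t.1 k + t.2 k) - t.1 k
          ring
        · intro h
          obtain ⟨h1, h2⟩ := Prod.ext_iff.mp h
          refine Prod.ext_iff.mpr ⟨funext fun k => congrFun h1 k, funext fun k => ?_⟩
          show t.1 k + t.2 k = t0.2 k
          rw [congrFun h1 k, congrFun h2 k]
          show t0.1 k + (t0.2 k - t0.1 k) = t0.2 k
          ring
      · simp
    have eW := ent_of_unif (p := p) hq hWunif
    have eX := ent_of_unif (p := p) hq hXunif
    have eWX := ent_of_unif (p := p) hq hWXunif
    unfold mutInf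
    rw [eW, eX, eWX]
    have hcardprod : ((Fintype.card ((Fin K → F) × (Fin K → F))) : ℝ)
        = (cFK : ℝ) * (cFK : ℝ) := by
      rw [Fintype.card_prod, ← hcFK]
      push_cast
      ring
    rw [hcardprod, Real.logb_mul hcFKR.ne' hcFKR.ne']
    ring
  · intro U k hk
    refine condMutInf_eq_zero_of_fn hq hp0
      (f := fun c => c.1 + ∑ u ∈ U, c.2.2 u) (fun ω => ?_)
    show ∑ u ∈ U, ((e ω).1 u + (e ω).2 u)
      = (∑ u ∈ U, (e ω).1 u) + ∑ u ∈ U, (e ω).2 u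
    rw [Finset.sum_add_distrib]

set_option maxHeartbeats 4000000 in
theorem conversepart (F : Type) [Field F] [Fintype F] (K : ℕ) (hK : 2 ≤ K) :
    (∀ (L LX LY LZ LZS : ℕ), 1 ≤ L →
      ∀ (Ω : Type) [Fintype Ω], ∀ (p : Ω → ℝ),
      (∀ ω, 0 ≤ p ω) → (∑ ω, p ω) = 1 →
      ∀ (W : Fin K → Ω → Fin L → F) (Z : Fin K → Ω → Fin LZ → F)
        (ZS : Ω → Fin LZS → F)
        (X : Fin K → Ω → Fin LX → F)
        (Y : Finset (Fin K) → Fin K → Ω → Fin LY → F),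
      (∀ (w : Fin K → Fin L → F) (z : Fin K → Fin LZ → F),
        pr p (fun ω => (∀ k, W k ω = w k) ∧ (∀ k, Z k ω = z k))
          = (1 / (Fintype.card F : ℝ) ^ L) ^ K * pr p (fun ω => ∀ k, Z k ω = z k)) →
      (∀ k, ∃ g : (Fin LZS → F) → Fin LZ → F, ∀ ω, Z k ω = g (ZS ω)) →
      (∀ k, ∃ φ : (Fin L → F) → (Fin LZ → F) → Fin LX → F,
        ∀ ω, X k ω = φ (W k ω) (Z k ω)) →
      (∀ (U : Finset (Fin K)), ∀ k ∈ U,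
        ∃ ψ : ((u : {u : Fin K // u ∈ U}) → Fin LX → F) → Fin LY → F,
          ∀ ω, Y U k ω = ψ (fun u => X u.1 ω)) →
      (∀ (U : Finset (Fin K)), ∀ k ∈ U,
        condEnt (Fintype.card F) p (fun ω => ∑ u ∈ U, W u ω)
          (fun ω => (Y U k ω, W k ω, Z k ω)) = 0) →
      (mutInf (Fintype.card F) p (fun ω => fun k => W k ω)
          (fun ω => fun k => X k ω) = 0) →
      (L ≤ LX ∧ L ≤ LY ∧
        (∀ k : Fin K, (K : ℝ) * (L : ℝ) ≤ ent (Fintype.card F) p (Z k)) ∧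
        (K : ℝ) * (L : ℝ) ≤ ent (Fintype.card F) p ZS ∧
        K * L ≤ LZ ∧ K * L ≤ LZS ∧
        1 ≤ (LX : ℝ) / (L : ℝ) ∧ 1 ≤ (LY : ℝ) / (L : ℝ) ∧
        (K : ℝ) ≤ (LZ : ℝ) / (L : ℝ) ∧ (K : ℝ) ≤ (LZS : ℝ) / (L : ℝ))) := by
  intro L LX LY LZ LZS hL Ω instΩ p hp0 hp1 W Z ZS X Y hiid hkeys hφ hψ hcorr hsec
  classical
  have hq : 2 ≤ Fintype.card F := Fintype.one_lt_card
  set qF := Fintype.card F with hqF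
  -- encoders
  have hΦex : ∀ k : Fin K, ∃ φ : (Fin L → F) → (Fin LZ → F) → Fin LX → F,
      ∀ ω, X k ω = φ (W k ω) (Z k ω) := hφ
  set Φ : Fin K → (Fin L → F) → (Fin LZ → F) → Fin LX → F :=
    fun k => (hΦex k).choose with hΦdef
  have hΦ : ∀ k ω, X k ω = Φ k (W k ω) (Z k ω) := fun k => (hΦex k).choose_spec
  set Wt : Ω → Fin K → Fin L → F := fun ω k => W k ω with hWt
  set Xt : Ω → Fin K → Fin LX → F := fun ω k => X k ω with hXt
  -- correctness in entropy form
  have hcorr' : ∀ (U : Finset (Fin K)) (k : Fin K), k ∈ U →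
      ent qF p (fun ω => ((∑ u ∈ U, W u ω), (Y U k ω, W k ω, Z k ω)))
        = ent qF p (fun ω => (Y U k ω, W k ω, Z k ω)) := by
    intro U k hk
    have h := hcorr U k hk
    unfold condEnt at h
    linarith
  -- security in entropy form
  have hsec' : ent qF p (fun ω => (Wt ω, Xt ω)) = ent qF p Wt + ent qF p Xt := by
    have h := hsec
    unfold mutInf at h
    linarith
  -- general recovery with full X-tuple
  have hrec : ∀ j k : Fin K, j ≠ k →
      ent qF p (fun ω => (W j ω, Xt ω, W k ω, Z k ω))
        = ent qF p (fun ω => (Xt ω, W k ω, Z k ω)) := by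
    intro j k hjk
    have hkU : k ∈ ({j, k} : Finset (Fin K)) := by simp
    obtain ⟨ψU, hψU⟩ := hψ {j, k} k hkU
    have hsum : ∀ ω, (∑ u ∈ ({j, k} : Finset (Fin K)), W u ω) = W j ω + W k ω :=
      fun ω => Finset.sum_pair hjk
    have h0 := hcorr' {j, k} k hkU
    have hext := ent_extend hq hp0 hp1 (C := Xt) h0
    have eL : ent qF p (fun ω => ((∑ u ∈ ({j, k} : Finset (Fin K)), W u ω),
          (Y {j, k} k ω, W k ω, Z k ω), Xt ω))
        = ent qF p (fun ω => (W j ω, Xt ω, W k ω, Z k ω)) :=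
      ent_congr hq hp0
        (fun t => (t.1 - t.2.1.2.1, t.2.2, t.2.1.2.1, t.2.1.2.2))
        (fun s => (s.1 + s.2.2.1, (ψU (fun u => s.2.1 u.1), s.2.2.1, s.2.2.2), s.2.1))
        (fun ω => Prod.ext (by simp [hsum ω]) rfl)
        (fun ω => Prod.ext (hsum ω) (Prod.ext (Prod.ext (hψU ω) rfl) rfl))
    have eR : ent qF p (fun ω => ((Y {j, k} k ω, W k ω, Z k ω), Xt ω))
        = ent qF p (fun ω => (Xt ω, W k ω, Z k ω)) :=
      ent_congr hq hp0
        (fun t => (t.2, t.1.2.1, t.1.2.2))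
        (fun s => ((ψU (fun u => s.1 u.1), s.2.1, s.2.2), s.1))
        (fun ω => rfl)
        (fun ω => Prod.ext (Prod.ext (hψU ω) rfl) rfl)
    linarith [eL, eR, hext]
  -- two distinct indices
  have hKpos : 0 < K := by omega
  set ka : Fin K := ⟨0, by omega⟩ with hka
  set kb : Fin K := ⟨1, by omega⟩ with hkb
  have hab : kb ≠ ka := by
    rw [hka, hkb]
    intro h
    exact absurd (Fin.mk.inj h) one_ne_zero
  -- entropy of a single input
  have hWk : ∀ k : Fin K, ent qF p (W k) = (L : ℝ) := by
    intro k
    have hi := indep_of_fn W Z hiid k (V := fun _ : Ω => ()) (f := fun _ _ => ())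
      (fun ω => rfl)
    have h := ent_pair_of_unif hq hp0 hp1 hi
    rw [ent_const hp1, logb_card_fun hq, add_zero] at h
    have e : ent qF p (fun ω => (W k ω, ())) = ent qF p (W k) :=
      ent_congr hq hp0 Prod.fst (fun a => (a, ())) (fun ω => rfl) (fun ω => rfl)
    exact e.symm.trans h
  -- L ≤ LX and L ≤ LY
  have hLXr : (L : ℝ) ≤ LX := by
    have hkU : ka ∈ ({kb, ka} : Finset (Fin K)) := by simp
    obtain ⟨ψU, hψU⟩ := hψ {kb, ka} ka hkU
    have hsum : ∀ ω, (∑ u ∈ ({kb, ka} : Finset (Fin K)), W u ω) = W kb ω + W ka ω :=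
      fun ω => Finset.sum_pair hab
    set yfun : (Fin LX → F) → (Fin L → F) → (Fin LZ → F) → Fin LY → F :=
      fun xj wk zk => ψU (fun u => if u.1 = kb then xj else Φ ka wk zk) with hyfun
    have hy : ∀ ω, Y {kb, ka} ka ω = yfun (X kb ω) (W ka ω) (Z ka ω) := by
      intro ω
      rw [hψU ω]
      show ψU (fun u => X u.1 ω)
        = ψU (fun u => if u.1 = kb then X kb ω else Φ ka (W ka ω) (Z ka ω))
      refine congrArg ψU (funext fun u => ?_)
      rcases Finset.mem_insert.mp u.2 with h | h
      · rw [if_pos h, h]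
      · rw [Finset.mem_singleton] at h
        rw [if_neg (by rw [h]; exact fun hh => hab hh.symm), h, hΦ ka ω]
    have h0 := hcorr' {kb, ka} ka hkU
    have hext := ent_extend hq hp0 hp1 (C := X kb) h0
    have eL : ent qF p (fun ω => ((∑ u ∈ ({kb, ka} : Finset (Fin K)), W u ω),
          (Y {kb, ka} ka ω, W ka ω, Z ka ω), X kb ω))
        = ent qF p (fun ω => (W kb ω, X kb ω, W ka ω, Z ka ω)) :=
      ent_congr hq hp0
        (fun t => (t.1 - t.2.1.2.1, t.2.2, t.2.1.2.1, t.2.1.2.2))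
        (fun s => (s.1 + s.2.2.1, (yfun s.2.1 s.2.2.1 s.2.2.2, s.2.2.1, s.2.2.2), s.2.1))
        (fun ω => Prod.ext (by simp [hsum ω]) rfl)
        (fun ω => Prod.ext (hsum ω) (Prod.ext (Prod.ext (hy ω) rfl) rfl))
    have eR : ent qF p (fun ω => ((Y {kb, ka} ka ω, W ka ω, Z ka ω), X kb ω))
        = ent qF p (fun ω => (X kb ω, W ka ω, Z ka ω)) :=
      ent_congr hq hp0
        (fun t => (t.2, t.1.2.1, t.1.2.2))
        (fun s => ((yfun s.1 s.2.1 s.2.2, s.2.1, s.2.2), s.1))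
        (fun ω => rfl)
        (fun ω => Prod.ext (Prod.ext (hy ω) rfl) rfl)
    have hrecX : ent qF p (fun ω => (W kb ω, X kb ω, W ka ω, Z ka ω))
        = ent qF p (fun ω => (X kb ω, W ka ω, Z ka ω)) := by linarith [eL, eR, hext]
    have hab' : ka ≠ kb := fun h => hab h.symm
    have hiV := indep_of_fn W Z hiid kb (V := fun ω => (W ka ω, Z ka ω))
      (f := fun wr z => (wr ⟨ka, hab'⟩, z ka)) (fun ω => rfl)
    have hE1 : ent qF p (fun ω => (W kb ω, W ka ω, Z ka ω))
        = (L : ℝ) + ent qF p (fun ω => (W ka ω, Z ka ω)) := by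
      have h := ent_pair_of_unif hq hp0 hp1 hiV
      rwa [logb_card_fun hq] at h
    have s1 : ent qF p (fun ω => (W kb ω, W ka ω, Z ka ω))
        ≤ ent qF p (fun ω => (W kb ω, X kb ω, W ka ω, Z ka ω)) :=
      ent_le_of_fn hq hp0 (fun t => (t.1, t.2.2)) (fun ω => rfl)
    have s2 : ent qF p (fun ω => (X kb ω, W ka ω, Z ka ω))
        ≤ ent qF p (X kb) + ent qF p (fun ω => (W ka ω, Z ka ω)) :=
      ent_pair_le hq hp0 hp1 (X kb) (fun ω => (W ka ω, Z ka ω))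
    have s3 : ent qF p (X kb) ≤ (LX : ℝ) := ent_le_nat hq hp0 hp1 (X kb)
    linarith
  have hLYr : (L : ℝ) ≤ LY := by
    have hkU : ka ∈ ({kb, ka} : Finset (Fin K)) := by simp
    have hsum : ∀ ω, (∑ u ∈ ({kb, ka} : Finset (Fin K)), W u ω) = W kb ω + W ka ω :=
      fun ω => Finset.sum_pair hab
    have h0 := hcorr' {kb, ka} ka hkU
    have eL2 : ent qF p (fun ω => ((∑ u ∈ ({kb, ka} : Finset (Fin K)), W u ω),
          (Y {kb, ka} ka ω, W ka ω, Z ka ω)))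
        = ent qF p (fun ω => (W kb ω, Y {kb, ka} ka ω, W ka ω, Z ka ω)) :=
      ent_congr hq hp0
        (fun t => (t.1 - t.2.2.1, t.2))
        (fun s => (s.1 + s.2.2.1, s.2))
        (fun ω => Prod.ext (by simp [hsum ω]) rfl)
        (fun ω => Prod.ext (hsum ω) rfl)
    have h2 : ent qF p (fun ω => (W kb ω, Y {kb, ka} ka ω, W ka ω, Z ka ω))
        = ent qF p (fun ω => (Y {kb, ka} ka ω, W ka ω, Z ka ω)) := eL2.symm.trans h0
    have hab' : ka ≠ kb := fun h => hab h.symm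
    have hiV := indep_of_fn W Z hiid kb (V := fun ω => (W ka ω, Z ka ω))
      (f := fun wr z => (wr ⟨ka, hab'⟩, z ka)) (fun ω => rfl)
    have hE1 : ent qF p (fun ω => (W kb ω, W ka ω, Z ka ω))
        = (L : ℝ) + ent qF p (fun ω => (W ka ω, Z ka ω)) := by
      have h := ent_pair_of_unif hq hp0 hp1 hiV
      rwa [logb_card_fun hq] at h
    have s1 : ent qF p (fun ω => (W kb ω, W ka ω, Z ka ω))
        ≤ ent qF p (fun ω => (W kb ω, Y {kb, ka} ka ω, W ka ω, Z ka ω)) :=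
      ent_le_of_fn hq hp0 (fun t => (t.1, t.2.2)) (fun ω => rfl)
    have s2 : ent qF p (fun ω => (Y {kb, ka} ka ω, W ka ω, Z ka ω))
        ≤ ent qF p (Y {kb, ka} ka) + ent qF p (fun ω => (W ka ω, Z ka ω)) :=
      ent_pair_le hq hp0 hp1 (Y {kb, ka} ka) (fun ω => (W ka ω, Z ka ω))
    have s3 : ent qF p (Y {kb, ka} ka) ≤ (LY : ℝ) := ent_le_nat hq hp0 hp1 _
    linarith
  -- entropy of the full input tuple
  have hWfull : ent qF p Wt = (K : ℝ) * L := by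
    have h := ent_of_unif (p := p) hq (pr_W_unif W Z hp1 hiid)
    rwa [logb_card_WW hq K L] at h
  -- key-rate bound
  have hZk : ∀ k : Fin K, (K : ℝ) * L ≤ ent qF p (Z k) := by
    intro k
    obtain ⟨j, hjk⟩ : ∃ j, j ≠ k := by
      by_cases h : k = ka
      · exact ⟨kb, by rw [h]; exact hab⟩
      · exact ⟨ka, fun hh => h hh.symm⟩
    -- full recovery of all inputs from (Xt, W k, Z k)
    have hind : ∀ S : Finset (Fin K),
        ent qF p (fun ω => ((fun u => if u ∈ S then W u ω else 0), Xt ω, W k ω, Z k ω))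
          = ent qF p (fun ω => (Xt ω, W k ω, Z k ω)) := by
      intro S
      induction S using Finset.induction_on with
      | empty =>
        exact ent_congr hq hp0 (fun t => t.2) (fun r => (fun _ => 0, r))
          (fun ω => rfl)
          (fun ω => Prod.ext (funext fun u => by simp) rfl)
      | @insert a S' ha ih =>
        have e1 : ent qF p (fun ω =>
              ((fun u => if u ∈ insert a S' then W u ω else 0), Xt ω, W k ω, Z k ω))
            = ent qF p (fun ω =>
              (W a ω, (fun u => if u ∈ S' then W u ω else 0), Xt ω, W k ω, Z k ω)) :=
          ent_congr hq hp0
            (fun t => (t.1 a, (fun u => if u ∈ S' then t.1 u else 0), t.2))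
            (fun s => ((fun u => if u = a then s.1 else s.2.1 u), s.2.2))
            (fun ω => Prod.ext (by simp) (Prod.ext (funext fun u => by
              by_cases hu : u ∈ S'
              · simp [hu, Finset.mem_insert_of_mem hu]
              · simp [hu]) rfl))
            (fun ω => Prod.ext (funext fun u => by
              by_cases hu : u = a
              · simp [hu]
              · simp [hu, Finset.mem_insert]) rfl)
        have e2 : ent qF p (fun ω =>
              (W a ω, (fun u => if u ∈ S' then W u ω else 0), Xt ω, W k ω, Z k ω))
            = ent qF p (fun ω =>
              ((fun u => if u ∈ S' then W u ω else 0), Xt ω, W k ω, Z k ω)) := by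
          by_cases hak : a = k
          · subst hak
            exact ent_congr hq hp0 (fun t => t.2) (fun s => (s.2.2.1, s))
              (fun ω => rfl) (fun ω => rfl)
          · have h1 : ent qF p (fun ω => (W a ω, Xt ω, W k ω, Z k ω))
                = ent qF p (fun ω => (Xt ω, W k ω, Z k ω)) := hrec a k hak
            have h2 := ent_extend hq hp0 hp1
              (C := fun ω => (fun u => if u ∈ S' then W u ω else 0)) h1
            have e3 : ent qF p (fun ω =>
                  (W a ω, (Xt ω, W k ω, Z k ω), (fun u => if u ∈ S' then W u ω else 0)))
                = ent qF p (fun ω =>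
                  (W a ω, (fun u => if u ∈ S' then W u ω else 0), Xt ω, W k ω, Z k ω)) :=
              ent_congr hq hp0 (fun t => (t.1, t.2.2, t.2.1)) (fun s => (s.1, s.2.2, s.2.1))
                (fun ω => rfl) (fun ω => rfl)
            have e4 : ent qF p (fun ω =>
                  ((Xt ω, W k ω, Z k ω), (fun u => if u ∈ S' then W u ω else 0)))
                = ent qF p (fun ω =>
                  ((fun u => if u ∈ S' then W u ω else 0), Xt ω, W k ω, Z k ω)) :=
              ent_congr hq hp0 (fun t => (t.2, t.1)) (fun s => (s.2, s.1))
                (fun ω => rfl) (fun ω => rfl)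
            linarith [h2, e3, e4]
        exact e1.trans (e2.trans ih)
    have hfull : ent qF p (fun ω => (Wt ω, Xt ω, W k ω, Z k ω))
        = ent qF p (fun ω => (Xt ω, W k ω, Z k ω)) := by
      have h := hind Finset.univ
      have e0 : (fun ω => ((fun u => if u ∈ (Finset.univ : Finset (Fin K)) then W u ω else 0),
            Xt ω, W k ω, Z k ω)) = fun ω => (Wt ω, Xt ω, W k ω, Z k ω) := by
        funext ω
        simp only [Finset.mem_univ, if_true]
        rfl
      rw [e0] at h
      exact h
    have m1 : ent qF p (fun ω => (Wt ω, Xt ω))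
        ≤ ent qF p (fun ω => (Wt ω, Xt ω, Z k ω)) :=
      ent_le_of_fn hq hp0 (fun t => (t.1, t.2.1)) (fun ω => rfl)
    have m2 : ent qF p (fun ω => (Wt ω, Xt ω, Z k ω))
        = ent qF p (fun ω => (Wt ω, Xt ω, W k ω, Z k ω)) :=
      ent_congr hq hp0 (fun t => (t.1, t.2.1, t.1 k, t.2.2))
        (fun s => (s.1, s.2.1, s.2.2.2)) (fun ω => rfl) (fun ω => rfl)
    have e5 : ent qF p (fun ω => (Xt ω, W k ω, Z k ω))
        = ent qF p (fun ω =>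
          (X k ω, (fun u : {u : Fin K // u ≠ k} => X u.1 ω), W k ω, Z k ω)) :=
      ent_congr hq hp0
        (fun t => (t.1 k, (fun u : {u : Fin K // u ≠ k} => t.1 u.1), t.2))
        (fun s => ((fun u => if h : u = k then s.1 else s.2.1 ⟨u, h⟩), s.2.2))
        (fun ω => rfl)
        (fun ω => Prod.ext (funext fun u => by
          show X u ω = _
          by_cases hu : u = k
          · subst hu; simp
          · simp [hu]) rfl)
    have e6 : ent qF p (fun ω =>
          (X k ω, (fun u : {u : Fin K // u ≠ k} => X u.1 ω), W k ω, Z k ω))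
        = ent qF p (fun ω =>
          ((fun u : {u : Fin K // u ≠ k} => X u.1 ω), W k ω, Z k ω)) :=
      ent_congr hq hp0 (fun t => t.2) (fun s => (Φ k s.2.1 s.2.2, s))
        (fun ω => rfl)
        (fun ω => Prod.ext (hΦ k ω) rfl)
    have m5 : ent qF p (fun ω =>
          ((fun u : {u : Fin K // u ≠ k} => X u.1 ω), W k ω, Z k ω))
        ≤ ent qF p (fun ω => (fun u : {u : Fin K // u ≠ k} => X u.1 ω))
          + (ent qF p (W k) + ent qF p (Z k)) := by
      have a1 := ent_pair_le hq hp0 hp1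
        (fun ω => (fun u : {u : Fin K // u ≠ k} => X u.1 ω))
        (fun ω => (W k ω, Z k ω))
      have a2 := ent_pair_le hq hp0 hp1 (W k) (Z k)
      linarith
    -- P5 : L + ent Xmk ≤ ent Xt
    have p5 : (L : ℝ) + ent qF p (fun ω => (fun u : {u : Fin K // u ≠ k} => X u.1 ω))
        ≤ ent qF p Xt := by
      have hiV := indep_of_fn W Z hiid k
        (V := fun ω => ((fun u : {u : Fin K // u ≠ k} => X u.1 ω), W j ω, Z j ω))
        (f := fun wr z => ((fun u => Φ u.1 (wr u) (z u.1)), wr ⟨j, hjk⟩, z j))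
        (fun ω => Prod.ext (funext fun u => hΦ u.1 ω) rfl)
      have c1 : ent qF p (fun ω => (W k ω,
            (fun u : {u : Fin K // u ≠ k} => X u.1 ω), W j ω, Z j ω))
          = (L : ℝ) + ent qF p (fun ω =>
            ((fun u : {u : Fin K // u ≠ k} => X u.1 ω), W j ω, Z j ω)) := by
        have h := ent_pair_of_unif hq hp0 hp1 hiV
        rwa [logb_card_fun hq] at h
      have c2 : ent qF p (fun ω => (W k ω,
            (fun u : {u : Fin K // u ≠ k} => X u.1 ω), W j ω, Z j ω))
          ≤ ent qF p (fun ω => (W k ω, Xt ω, W j ω, Z j ω)) :=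
        ent_le_of_fn hq hp0
          (fun t => (t.1, (fun u : {u : Fin K // u ≠ k} => t.2.1 u.1), t.2.2))
          (fun ω => rfl)
      have c3 : ent qF p (fun ω => (W k ω, Xt ω, W j ω, Z j ω))
          = ent qF p (fun ω => (Xt ω, W j ω, Z j ω)) := hrec k j (Ne.symm hjk)
      have c4 := ent_submod hq hp0 hp1 (X k) (fun ω => (W j ω, Z j ω))
        (fun ω => (fun u : {u : Fin K // u ≠ k} => X u.1 ω))
      have r1 : ent qF p (fun ω => (X k ω, (W j ω, Z j ω),
            (fun u : {u : Fin K // u ≠ k} => X u.1 ω)))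
          = ent qF p (fun ω => (Xt ω, W j ω, Z j ω)) :=
        ent_congr hq hp0
          (fun t => ((fun u => if h : u = k then t.1 else t.2.2 ⟨u, h⟩), t.2.1.1, t.2.1.2))
          (fun s => (s.1 k, (s.2.1, s.2.2), fun u : {u : Fin K // u ≠ k} => s.1 u.1))
          (fun ω => Prod.ext (funext fun u => by
            show X u ω = _
            by_cases hu : u = k
            · subst hu; simp
            · simp [hu]) rfl)
          (fun ω => rfl)
      have r2 : ent qF p (fun ω => (X k ω,
            (fun u : {u : Fin K // u ≠ k} => X u.1 ω)))
          = ent qF p Xt :=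
        ent_congr hq hp0
          (fun t => fun u => if h : u = k then t.1 else t.2 ⟨u, h⟩)
          (fun x => (x k, fun u : {u : Fin K // u ≠ k} => x u.1))
          (fun ω => funext fun u => by
            show X u ω = _
            by_cases hu : u = k
            · subst hu; simp
            · simp [hu])
          (fun ω => rfl)
      have r3 : ent qF p (fun ω => ((W j ω, Z j ω),
            (fun u : {u : Fin K // u ≠ k} => X u.1 ω)))
          = ent qF p (fun ω =>
            ((fun u : {u : Fin K // u ≠ k} => X u.1 ω), W j ω, Z j ω)) :=
        ent_congr hq hp0 (fun t => (t.2, t.1.1, t.1.2)) (fun s => ((s.2.1, s.2.2), s.1))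
          (fun ω => rfl) (fun ω => rfl)
      linarith [c1, c2, c3, c4, r1, r2, r3]
    have hwk := hWk k
    -- final assembly
    have z1 : ent qF p (fun ω => (Wt ω, Xt ω)) = (K : ℝ) * L + ent qF p Xt := by
      rw [hsec', hWfull]
    linarith [z1, m1, m2, hfull, e5, e6, m5, p5, hwk]
  -- source-key bound
  have hZS : (K : ℝ) * L ≤ ent qF p ZS := by
    obtain ⟨g0, hg0⟩ := hkeys ka
    have h := ent_le_of_fn hq hp0 g0 hg0
    linarith [hZk ka, h]
  -- numeric conclusions
  have hLpos : (0 : ℝ) < L := by exact_mod_cast hL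
  have hZknat : K * L ≤ LZ := by
    have h1 := hZk ka
    have h2 : ent qF p (Z ka) ≤ (LZ : ℝ) := ent_le_nat hq hp0 hp1 (Z ka)
    have : ((K * L : ℕ) : ℝ) ≤ (LZ : ℝ) := by push_cast; linarith
    exact_mod_cast this
  have hZSnat : K * L ≤ LZS := by
    have h2 : ent qF p ZS ≤ (LZS : ℝ) := ent_le_nat hq hp0 hp1 ZS
    have : ((K * L : ℕ) : ℝ) ≤ (LZS : ℝ) := by push_cast; linarith
    exact_mod_cast this
  refine ⟨by exact_mod_cast hLXr, by exact_mod_cast hLYr, hZk, hZS, hZknat, hZSnat,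
    ?_, ?_, ?_, ?_⟩
  · rw [le_div_iff₀ hLpos]; linarith
  · rw [le_div_iff₀ hLpos]; linarith
  · rw [le_div_iff₀ hLpos]
    have : ((K * L : ℕ) : ℝ) ≤ (LZ : ℝ) := by exact_mod_cast hZknat
    push_cast at this
    linarith
  · rw [le_div_iff₀ hLpos]
    have : ((K * L : ℕ) : ℝ) ≤ (LZS : ℝ) := by exact_mod_cast hZSnat
    push_cast at this
    linarith

/-- **Theorem 2 (optimal rate region with user dropouts).**
Converse: every protocol satisfying dropout correctness and server security has
`L_X ≥ L`, `L_Y ≥ L`, `H(Z_k) ≥ K·L` for every user `k`, and `H(Z_Σ) ≥ K·L`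
(hence `R_X ≥ 1`, `R_Y ≥ 1`, `R_Z ≥ K`, `R_{Z_Σ} ≥ K`).
Achievability: there is a protocol with `L = 1`, `L_X = L_Y = 1`, keys and source
key in `F^K`, satisfying dropout correctness, server security and dropout user
security. Hence the optimal rate region is exactly
`{(R_X, R_Y, R_Z, R_{Z_Σ}) : R_X ≥ 1, R_Y ≥ 1, R_Z ≥ K, R_{Z_Σ} ≥ K}`. -/
theorem theorem2_optimal_rate_region_dropouts
    (F : Type) [Field F] [Fintype F] (K : ℕ) (hK : 2 ≤ K) :
    -- Converse
    (∀ (L LX LY LZ LZS : ℕ), 1 ≤ L →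
      ∀ (Ω : Type) [Fintype Ω], ∀ (p : Ω → ℝ),
      (∀ ω, 0 ≤ p ω) → (∑ ω, p ω) = 1 →
      ∀ (W : Fin K → Ω → Fin L → F) (Z : Fin K → Ω → Fin LZ → F)
        (ZS : Ω → Fin LZS → F)
        (X : Fin K → Ω → Fin LX → F)
        (Y : Finset (Fin K) → Fin K → Ω → Fin LY → F),
      -- inputs i.i.d. uniform on F^L and independent of the keys
      (∀ (w : Fin K → Fin L → F) (z : Fin K → Fin LZ → F),
        pr p (fun ω => (∀ k, W k ω = w k) ∧ (∀ k, Z k ω = z k))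
          = (1 / (Fintype.card F : ℝ) ^ L) ^ K * pr p (fun ω => ∀ k, Z k ω = z k)) →
      -- the keys are deterministic functions of the source key
      (∀ k, ∃ g : (Fin LZS → F) → Fin LZ → F, ∀ ω, Z k ω = g (ZS ω)) →
      -- deterministic encoders X_k = φ_k(W_k, Z_k)
      (∀ k, ∃ φ : (Fin L → F) → (Fin LZ → F) → Fin LX → F,
        ∀ ω, X k ω = φ (W k ω) (Z k ω)) →
      -- deterministic server maps Y_k^U = ψ_k^U((X_u)_{u ∈ U})
      (∀ (U : Finset (Fin K)), ∀ k ∈ U,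
        ∃ ψ : ((u : {u : Fin K // u ∈ U}) → Fin LX → F) → Fin LY → F,
          ∀ ω, Y U k ω = ψ (fun u => X u.1 ω)) →
      -- dropout correctness: H(Σ_{u ∈ U} W_u | Y_k^U, W_k, Z_k) = 0
      (∀ (U : Finset (Fin K)), ∀ k ∈ U,
        condEnt (Fintype.card F) p (fun ω => ∑ u ∈ U, W u ω)
          (fun ω => (Y U k ω, W k ω, Z k ω)) = 0) →
      -- server security: I(W_1, …, W_K ; X_1, …, X_K) = 0
      (mutInf (Fintype.card F) p (fun ω => fun k => W k ω)
          (fun ω => fun k => X k ω) = 0) →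
      (L ≤ LX ∧ L ≤ LY ∧
        (∀ k : Fin K, (K : ℝ) * (L : ℝ) ≤ ent (Fintype.card F) p (Z k)) ∧
        (K : ℝ) * (L : ℝ) ≤ ent (Fintype.card F) p ZS ∧
        K * L ≤ LZ ∧ K * L ≤ LZS ∧
        1 ≤ (LX : ℝ) / (L : ℝ) ∧ 1 ≤ (LY : ℝ) / (L : ℝ) ∧
        (K : ℝ) ≤ (LZ : ℝ) / (L : ℝ) ∧ (K : ℝ) ≤ (LZS : ℝ) / (L : ℝ)))
    ∧
    -- Achievability: a protocol with L = 1, L_X = L_Y = 1, Z_k, Z_Σ ∈ F^K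
    (∃ (n : ℕ) (p : Fin n → ℝ)
        (W : Fin K → Fin n → F) (Z : Fin K → Fin n → Fin K → F)
        (ZS : Fin n → Fin K → F) (X : Fin K → Fin n → F)
        (Y : Finset (Fin K) → Fin K → Fin n → F),
      (∀ ω, 0 ≤ p ω) ∧ (∑ ω, p ω) = 1 ∧
      -- inputs i.i.d. uniform on F and independent of the keys
      (∀ (w : Fin K → F) (z : Fin K → Fin K → F),
        pr p (fun ω => (∀ k, W k ω = w k) ∧ (∀ k, Z k ω = z k))
          = (1 / (Fintype.card F : ℝ)) ^ K * pr p (fun ω => ∀ k, Z k ω = z k)) ∧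
      -- the keys are deterministic functions of the source key
      (∀ k, ∃ g : (Fin K → F) → Fin K → F, ∀ ω, Z k ω = g (ZS ω)) ∧
      -- deterministic encoders
      (∀ k, ∃ φ : F → (Fin K → F) → F, ∀ ω, X k ω = φ (W k ω) (Z k ω)) ∧
      -- deterministic server maps
      (∀ (U : Finset (Fin K)), ∀ k ∈ U,
        ∃ ψ : ((u : {u : Fin K // u ∈ U}) → F) → F,
          ∀ ω, Y U k ω = ψ (fun u => X u.1 ω)) ∧
      -- dropout correctness
      (∀ (U : Finset (Fin K)), ∀ k ∈ U,
        condEnt (Fintype.card F) p (fun ω => ∑ u ∈ U, W u ω)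
          (fun ω => (Y U k ω, W k ω, Z k ω)) = 0) ∧
      -- server security
      (mutInf (Fintype.card F) p (fun ω => fun k => W k ω)
          (fun ω => fun k => X k ω) = 0) ∧
      -- dropout user security: I(W_1, …, W_K ; Y_k^U | Σ_{u ∈ U} W_u, W_k, Z_k) = 0
      (∀ (U : Finset (Fin K)), ∀ k ∈ U,
        condMutInf (Fintype.card F) p (fun ω => fun u => W u ω) (Y U k)
          (fun ω => (∑ u ∈ U, W u ω, W k ω, Z k ω)) = 0)) := by
  exact ⟨conversepart F K hK, achievpart F K hK⟩
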